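/- arXiv:2202.03842 — 2 statements merged into one kernel-verified Lean document; each statement's English description precedes it below -/
import Mathlib

section
/- Let f be a measure-preserving automorphism of a probability space (X, 𝔄, μ), F = f^R an induced map on A ⊂ X with induced time R : A → ℕ, and ν an F-invariant probability that lifts μ (i.e., μ is the normalized pushdown of ν). If R is exact (R(x) = R(f^j(x)) + j whenever x, f^j(x) ∈ A with 0 ≤ j < R(x)), μ is ergodic, and μ(A) = 1, then (1/2)·(∫R dν)·(∫R dμ) ≤ ∫R² dν ≤ 2·(∫R dν)·(∫R dμ). -/
open MeasureTheory

lemma gauss2_aux (n : ℕ) : (∑ j ∈ Finset.range n, (n - j)) * 2 = n * (n + 1) := by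
  induction n with
  | zero => simp
  | succ n ih =>
    rw [Finset.sum_range_succ']
    have h1 : ∀ j ∈ Finset.range n, (n + 1) - (j + 1) = n - j := by
      intro j hj; omega
    rw [Finset.sum_congr rfl h1]
    generalize hS : ∑ j ∈ Finset.range n, (n - j) = S at ih ⊢
    have hnn : n * (n + 1) + (n + 1) * 2 = (n + 1) * (n + 1 + 1) := by ring
    omega

lemma sum_le_sq (n : ℕ) : (∑ j ∈ Finset.range n, (n - j)) ≤ n * n := by
  calc (∑ j ∈ Finset.range n, (n - j)) ≤ ∑ _j ∈ Finset.range n, n :=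
        Finset.sum_le_sum fun j _ => Nat.sub_le _ _
    _ = n * n := by simp [Finset.sum_const, mul_comm]

lemma sq_le_two_sum (n : ℕ) : n * n ≤ 2 * ∑ j ∈ Finset.range n, (n - j) := by
  have := gauss2_aux n
  nlinarith [Nat.mul_le_mul_left n (Nat.le_succ n)]

/-- Lemma C.1 of [Pi20]: if `R` is an exact induced time for `F = f^R`,
`μ` is ergodic with `μ(A) = 1`, and `μ` is the normalized pushdown of the
`F`-invariant probability `ν`, then
`(1/2)(∫R dν)(∫R dμ) ≤ ∫R² dν ≤ 2(∫R dν)(∫R dμ)`. -/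
theorem stmt_16 {X : Type*} [MeasurableSpace X] (f : X → X) (μ ν : Measure X)
    [IsProbabilityMeasure μ] [IsProbabilityMeasure ν]
    (hf : MeasurePreserving f μ μ) (herg : Ergodic f μ)
    (A : Set X) (hA : MeasurableSet A) (hμA : μ A = 1) (hνA : ν A = 1)
    (R : X → ℕ) (hR : Measurable R) (hR1 : ∀ x ∈ A, 1 ≤ R x)
    (F : X → X) (hF : ∀ x ∈ A, F x = f^[R x] x)
    (hFinv : ν.map F = ν)
    (hexact : ∀ x ∈ A, ∀ j : ℕ, j < R x → f^[j] x ∈ A → R x = R (f^[j] x) + j)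
    (hlift : μ = (∫⁻ x, (R x : ENNReal) ∂ν)⁻¹ •
      Measure.sum (fun j : ℕ => (ν.restrict {x | j < R x}).map (f^[j]))) :
    (1 / 2 : ENNReal) * (∫⁻ x, (R x : ENNReal) ∂ν) * (∫⁻ x, (R x : ENNReal) ∂μ)
        ≤ ∫⁻ x, ((R x : ENNReal)) ^ 2 ∂ν ∧
    ∫⁻ x, ((R x : ENNReal)) ^ 2 ∂ν
        ≤ 2 * (∫⁻ x, (R x : ENNReal) ∂ν) * (∫⁻ x, (R x : ENNReal) ∂μ) := by
  classical
  set I := ∫⁻ x, (R x : ENNReal) ∂ν with hIdef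
  set J := ∫⁻ x, (R x : ENNReal) ∂μ with hJdef
  have hfm : Measurable f := hf.measurable
  have hiter : ∀ j : ℕ, Measurable (f^[j]) := fun j => hfm.iterate j
  have hs : ∀ j : ℕ, MeasurableSet {x | j < R x} := fun j =>
    measurableSet_lt measurable_const hR
  have hRc : Measurable fun x => (R x : ENNReal) := by
    exact (measurable_from_top).comp hR
  -- `I ≥ 1`
  have hI1 : (1 : ENNReal) ≤ I := by
    calc (1 : ENNReal) = ν A := hνA.symm
      _ = ∫⁻ x, A.indicator (fun _ => (1 : ENNReal)) x ∂ν := by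
          rw [lintegral_indicator hA]; simp
      _ ≤ I := by
          refine lintegral_mono fun x => ?_
          by_cases hx : x ∈ A
          · simpa [hx] using (Nat.one_le_cast (α := ENNReal)).2 (hR1 x hx)
          · simp [hx]
  have hI0 : I ≠ 0 := fun h => by simp [h] at hI1
  have hItop : I ≠ ⊤ := by
    intro h
    have : μ Set.univ = 0 := by rw [hlift, h]; simp
    simp [measure_univ] at this
  -- the unnormalized pushdown gives zero mass to `Aᶜ`
  have hS0 : Measure.sum (fun j : ℕ => (ν.restrict {x | j < R x}).map (f^[j])) Aᶜ = 0 := by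
    have hμAc : μ Aᶜ = 0 := by
      have := measure_compl hA (measure_ne_top μ A)
      rw [hμA, measure_univ] at this
      simp [this]
    rw [hlift] at hμAc
    simp only [Measure.smul_apply, smul_eq_mul] at hμAc
    rcases mul_eq_zero.1 hμAc with h | h
    · exact absurd h (ENNReal.inv_ne_zero.2 hItop)
    · exact h
  have hnull : ∀ j : ℕ, ν ({x | j < R x} ∩ f^[j] ⁻¹' Aᶜ) = 0 := by
    intro j
    have hle := Measure.le_sum (fun j : ℕ => (ν.restrict {x | j < R x}).map (f^[j])) j
    have h1 : (ν.restrict {x | j < R x}).map (f^[j]) Aᶜ = 0 :=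
      le_antisymm (hS0 ▸ hle Aᶜ) zero_le
    rwa [Measure.map_apply (hiter j) hA.compl,
      Measure.restrict_apply ((hiter j) hA.compl), Set.inter_comm] at h1
  -- a.e. every point is in `A` and all its iterates up to the return time are in `A`
  have hae : ∀ᵐ x ∂ν, x ∈ A ∧ ∀ j : ℕ, j < R x → f^[j] x ∈ A := by
    have h1 : ∀ᵐ x ∂ν, x ∈ A := by
      have : ν Aᶜ = 0 := by
        have := measure_compl hA (measure_ne_top ν A)
        rw [hνA, measure_univ] at this; simp [this]
      exact ae_iff.2 this
    have h2 : ∀ᵐ x ∂ν, ∀ j : ℕ, j < R x → f^[j] x ∈ A := by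
      rw [ae_all_iff]
      intro j
      refine ae_iff.2 ?_
      have : {x | ¬(j < R x → f^[j] x ∈ A)} = {x | j < R x} ∩ f^[j] ⁻¹' Aᶜ := by
        ext x; simp [Classical.not_imp]
      rw [this]; exact hnull j
    exact h1.and h2
  -- per-j identity
  have hstep : ∀ j : ℕ, ∫⁻ x in {x | j < R x}, (R (f^[j] x) : ENNReal) ∂ν
      = ∫⁻ x in {x | j < R x}, ((R x - j : ℕ) : ENNReal) ∂ν := by
    intro j
    refine setLIntegral_congr_fun_ae (hs j) ?_
    filter_upwards [hae] with x hx hxj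
    obtain ⟨hxA, hall⟩ := hx
    have hmem : f^[j] x ∈ A := hall j hxj
    have := hexact x hxA j hxj hmem
    have : R (f^[j] x) = R x - j := by omega
    rw [this]
  set G : X → ℕ := fun x => ∑ j ∈ Finset.range (R x), (R x - j) with hGdef
  have hGm : Measurable fun x => (G x : ENNReal) :=
    (measurable_from_top
      (f := fun n : ℕ => ((∑ i ∈ Finset.range n, (n - i) : ℕ) : ENNReal))).comp hR
  -- compute J
  have hmu : J = I⁻¹ * ∑' j : ℕ, ∫⁻ x in {x | j < R x}, ((R x - j : ℕ) : ENNReal) ∂ν := by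
    rw [hJdef, hlift, lintegral_smul_measure, lintegral_sum_measure]
    congr 1
    refine tsum_congr fun j => ?_
    rw [lintegral_map hRc (hiter j)]
    exact hstep j
  have hsum : (∑' j : ℕ, ∫⁻ x in {x | j < R x}, ((R x - j : ℕ) : ENNReal) ∂ν)
      = ∫⁻ x, (G x : ENNReal) ∂ν := by
    have hmeas : ∀ j : ℕ, AEMeasurable
        (fun x => ({x | j < R x}).indicator (fun x => ((R x - j : ℕ) : ENNReal)) x) ν := by
      intro j
      exact (Measurable.indicator ((measurable_from_top
        (f := fun n : ℕ => ((n - j : ℕ) : ENNReal))).comp hR) (hs j)).aemeasurable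
    calc (∑' j : ℕ, ∫⁻ x in {x | j < R x}, ((R x - j : ℕ) : ENNReal) ∂ν)
        = ∑' j : ℕ, ∫⁻ x, ({x | j < R x}).indicator
            (fun x => ((R x - j : ℕ) : ENNReal)) x ∂ν := by
          exact tsum_congr fun j => (lintegral_indicator (hs j) _).symm
      _ = ∫⁻ x, ∑' j : ℕ, ({x | j < R x}).indicator
            (fun x => ((R x - j : ℕ) : ENNReal)) x ∂ν := (lintegral_tsum hmeas).symm
      _ = ∫⁻ x, (G x : ENNReal) ∂ν := by
          refine lintegral_congr fun x => ?_
          have h0 : ∀ j ∉ Finset.range (R x),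
              ({x | j < R x}).indicator (fun x => ((R x - j : ℕ) : ENNReal)) x = 0 := by
            intro j hj
            have hxnot : x ∉ {y | j < R y} := by simpa using hj
            exact Set.indicator_of_notMem hxnot _
          rw [tsum_eq_sum h0]
          have h1 : ∀ j ∈ Finset.range (R x),
              ({x | j < R x}).indicator (fun x => ((R x - j : ℕ) : ENNReal)) x
                = ((R x - j : ℕ) : ENNReal) := by
            intro j hj
            exact Set.indicator_of_mem (by simpa using hj) _
          rw [Finset.sum_congr rfl h1, hGdef]
          push_cast
          rfl
  have hkey : I * J = ∫⁻ x, (G x : ENNReal) ∂ν := by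
    rw [hmu, ← mul_assoc, ENNReal.mul_inv_cancel hI0 hItop, one_mul, hsum]
  -- pointwise comparisons
  have hle1 : ∫⁻ x, (G x : ENNReal) ∂ν ≤ ∫⁻ x, ((R x : ENNReal)) ^ 2 ∂ν := by
    refine lintegral_mono fun x => ?_
    calc (G x : ENNReal) ≤ ((R x * R x : ℕ) : ENNReal) := Nat.cast_le.2 (sum_le_sq (R x))
      _ = ((R x : ENNReal)) ^ 2 := by push_cast; ring
  have hle2 : ∫⁻ x, ((R x : ENNReal)) ^ 2 ∂ν ≤ 2 * ∫⁻ x, (G x : ENNReal) ∂ν := by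
    rw [← lintegral_const_mul 2 hGm]
    refine lintegral_mono fun x => ?_
    calc ((R x : ENNReal)) ^ 2 = ((R x * R x : ℕ) : ENNReal) := by push_cast; ring
      _ ≤ ((2 * G x : ℕ) : ENNReal) := Nat.cast_le.2 (sq_le_two_sum (R x))
      _ = 2 * (G x : ENNReal) := by push_cast; ring
  constructor
  · calc (1 / 2 : ENNReal) * I * J ≤ 1 * I * J := by
          gcongr
          exact ENNReal.half_le_self
      _ = ∫⁻ x, (G x : ENNReal) ∂ν := by rw [one_mul, hkey]
      _ ≤ _ := hle1
  · calc ∫⁻ x, ((R x : ENNReal)) ^ 2 ∂ν ≤ 2 * ∫⁻ x, (G x : ENNReal) ∂ν := hle2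
      _ = 2 * I * J := by rw [mul_assoc, hkey]
end

section
/- Let F : A → X be a measurable induced map of f with induced time R : A → ℕ (F(x) = f^{R(x)}(x)) and let ν be an F-invariant probability measure. Then μ := Σ_{j≥0} f^j_*(ν|_{{R>j}}) is an f-invariant measure with total mass μ(X) = ∫R dν. -/
open MeasureTheory

private lemma measure_sum_nat_eq {X : Type*} [MeasurableSpace X] (μ : ℕ → Measure X) :
    Measure.sum μ = μ 0 + Measure.sum (fun j => μ (j + 1)) := by
  ext s hs
  rw [Measure.sum_apply _ hs, Measure.add_apply, Measure.sum_apply _ hs,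
    tsum_eq_zero_add' ENNReal.summable]

/-- Folklore lemma: if `F = f^R` is a measurable induced map with induced
time `R` and `ν` is an `F`-invariant probability, then
`μ = Σ_{j≥0} f^j_*(ν|_{R>j})` is an `f`-invariant measure of total mass
`∫ R dν`. -/
theorem stmt_17 {X : Type*} [MeasurableSpace X] (f : X → X) (hf : Measurable f)
    (A : Set X) (hA : MeasurableSet A)
    (R : X → ℕ) (hR : Measurable R) (hR1 : ∀ x ∈ A, 1 ≤ R x)
    (F : X → X) (hFmeas : Measurable F) (hF : ∀ x ∈ A, F x = f^[R x] x)
    (ν : Measure X) [IsProbabilityMeasure ν] (hνA : ν A = 1)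
    (hFinv : ν.map F = ν) :
    (Measure.sum (fun j : ℕ => (ν.restrict {x | j < R x}).map (f^[j]))).map f =
        Measure.sum (fun j : ℕ => (ν.restrict {x | j < R x}).map (f^[j])) ∧
    Measure.sum (fun j : ℕ => (ν.restrict {x | j < R x}).map (f^[j])) Set.univ =
        ∫⁻ x, (R x : ENNReal) ∂ν := by
  have hmeas : ∀ j : ℕ, Measurable (f^[j]) := fun j => hf.iterate j
  have hSmeas : ∀ j : ℕ, MeasurableSet {x | j < R x} := fun j =>
    measurableSet_lt measurable_const hR
  have hEmeas : ∀ j : ℕ, MeasurableSet {x | R x = j} := fun j =>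
    hR (measurableSet_singleton j)
  have hAae : ∀ᵐ x ∂ν, x ∈ A := by
    rw [ae_iff]
    have : {x | ¬ x ∈ A} = Aᶜ := rfl
    rw [this, (prob_compl_eq_zero_iff hA)]
    exact hνA
  have hRpos : ∀ᵐ x ∂ν, 0 < R x := by
    filter_upwards [hAae] with x hx
    exact hR1 x hx
  -- σ 0 = ν
  have hσ0 : (ν.restrict {x | 0 < R x}).map (f^[0]) = ν := by
    rw [Function.iterate_zero, Measure.map_id]
    exact Measure.restrict_eq_self_of_ae_mem hRpos
  constructor
  · -- invariance
    rw [Measure.map_sum hf.aemeasurable]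
    have key : ∀ j : ℕ,
        ((ν.restrict {x | j < R x}).map (f^[j])).map f =
          (ν.restrict {x | j + 1 < R x}).map (f^[j + 1]) +
            (ν.restrict {x | R x = j + 1}).map F := by
      intro j
      rw [Measure.map_map hf (hmeas j), ← Function.iterate_succ' f j]
      have hdecomp : {x | j < R x} = {x | j + 1 < R x} ∪ {x | R x = j + 1} := by
        ext x; simp only [Set.mem_setOf_eq, Set.mem_union]
        omega
      rw [hdecomp, Measure.restrict_union ?_ (hEmeas (j + 1)),
        Measure.map_add _ _ (hmeas (j + 1))]
      · congr 1
        apply Measure.map_congr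
        refine (ae_restrict_iff' (hEmeas (j + 1))).mpr ?_
        filter_upwards [hAae] with x hxA hxR
        rw [hF x hxA, hxR]
      · intro s hs1 hs2 x hx
        have h1 := hs1 hx
        have h2 := hs2 hx
        simp only [Set.mem_setOf_eq] at h1 h2
        omega
    have step : Measure.sum
          (fun j : ℕ => ((ν.restrict {x | j < R x}).map (f^[j])).map f) =
        Measure.sum (fun j : ℕ => (ν.restrict {x | j + 1 < R x}).map (f^[j + 1])) +
          Measure.sum (fun j : ℕ => (ν.restrict {x | R x = j + 1}).map F) := by
      simp_rw [key]
      exact (Measure.sum_add_sum _ _).symm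
    -- the second sum equals ν
    have hE : Measure.sum (fun j : ℕ => (ν.restrict {x | R x = j + 1}).map F) = ν := by
      rw [← Measure.map_sum hFmeas.aemeasurable]
      have hdisj : Pairwise (Function.onFun Disjoint fun j : ℕ => {x | R x = j + 1}) := by
        intro i j hij
        simp only [Function.onFun, Set.disjoint_left, Set.mem_setOf_eq]
        intro x hx1 hx2
        omega
      rw [← Measure.restrict_iUnion hdisj (fun j => hEmeas (j + 1))]
      have hU : (⋃ j : ℕ, {x | R x = j + 1}) = {x | 0 < R x} := by
        ext x
        simp only [Set.mem_iUnion, Set.mem_setOf_eq]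
        constructor
        · rintro ⟨j, hj⟩; omega
        · intro h; exact ⟨R x - 1, by omega⟩
      have hres : ν.restrict {x | 0 < R x} = ν :=
        Measure.restrict_eq_self_of_ae_mem hRpos
      rw [hU, hres, hFinv]
    rw [step, hE,
      measure_sum_nat_eq fun j : ℕ => (ν.restrict {x | j < R x}).map f^[j], hσ0]
    exact add_comm _ _
  · -- total mass
    rw [Measure.sum_apply _ MeasurableSet.univ]
    have hmass : ∀ j : ℕ, ((ν.restrict {x | j < R x}).map (f^[j])) Set.univ =
        ν {x | j < R x} := by
      intro j
      rw [Measure.map_apply (hmeas j) MeasurableSet.univ, Set.preimage_univ,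
        Measure.restrict_apply_univ]
    simp_rw [hmass]
    have hpt : ∀ x, (R x : ENNReal) =
        ∑' j : ℕ, Set.indicator {x | j < R x} (1 : X → ENNReal) x := by
      intro x
      have : ∀ j : ℕ, Set.indicator {x | j < R x} (1 : X → ENNReal) x =
          if j < R x then 1 else 0 := by
        intro j
        by_cases h : j < R x <;> simp [Set.indicator, h]
      simp_rw [this]
      rw [tsum_eq_sum (s := Finset.range (R x))
        (by intro j hj; rw [Finset.mem_range] at hj; simp [hj])]
      rw [Finset.sum_congr rfl (fun j hj => if_pos (Finset.mem_range.mp hj))]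
      simp
    calc ∑' j : ℕ, ν {x | j < R x}
        = ∑' j : ℕ, ∫⁻ x, Set.indicator {x | j < R x} (1 : X → ENNReal) x ∂ν := by
          congr 1; ext j
          rw [lintegral_indicator_one (hSmeas j)]
      _ = ∫⁻ x, ∑' j : ℕ, Set.indicator {x | j < R x} (1 : X → ENNReal) x ∂ν := by
          rw [lintegral_tsum (fun j =>
            ((measurable_one.indicator (hSmeas j)).aemeasurable))]
      _ = ∫⁻ x, (R x : ENNReal) ∂ν := by
          congr 1; ext x; exact (hpt x).symm
end
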